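/- arXiv:0912.5093 — 5 statements merged into one kernel-verified Lean document; each statement's English description precedes it below -/
import Mathlib

section
/- For every ε > 0 and all sufficiently large d, there exists a subset F of Z/dZ with |F| ≥ d^(1-ε) such that F contains no nontrivial three-term arithmetic progressions: whenever n, n+r, n+2r all lie in F, we have r = 0. -/
open Real Finset

/-- Behrend-type construction: for every `ε > 0` and all sufficiently large `d`,
there is a subset `F` of `ℤ/dℤ` with `|F| ≥ d^(1-ε)` containing no nontrivial
three-term arithmetic progressions. -/
theorem statement0 (ε : ℝ) (hε : 0 < ε) :
    ∃ d₀ : ℕ, ∀ d : ℕ, d₀ ≤ d → ∃ F : Set (ZMod d),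
      (d : ℝ) ^ ((1 : ℝ) - ε) ≤ (Nat.card F : ℝ) ∧
      ∀ n r : ZMod d, n ∈ F → n + r ∈ F → n + 2 * r ∈ F → r = 0 := by
  set C : ℝ := max (64 / ε ^ 2) (4 / ε) with hC
  refine ⟨max 16 (⌈Real.exp C⌉₊ + 1), fun d hd => ?_⟩
  have hd16 : 16 ≤ d := le_trans (le_max_left _ _) hd
  haveI : NeZero d := ⟨by omega⟩
  have hdC : Real.exp C ≤ (d : ℝ) := by
    have h1 : ⌈Real.exp C⌉₊ + 1 ≤ d := le_trans (le_max_right _ _) hd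
    calc Real.exp C ≤ (⌈Real.exp C⌉₊ : ℝ) := Nat.le_ceil _
      _ ≤ (d : ℝ) := by exact_mod_cast le_trans (Nat.le_succ _) h1
  have hdpos : (0 : ℝ) < d := by positivity
  set L : ℝ := Real.log d with hL
  have hLC : C ≤ L := by
    rw [hL, ← Real.log_exp C]
    exact Real.log_le_log (Real.exp_pos C) hdC
  have hL1 : (64 / ε ^ 2) ≤ L := le_trans (le_max_left _ _) hLC
  have hL2 : (4 / ε) ≤ L := le_trans (le_max_right _ _) hLC
  have hLpos : 0 < L := lt_of_lt_of_le (by positivity) hL2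
  -- the key real inequality: log 4 + 4 √L ≤ ε L
  have hsqrt : Real.sqrt L ≥ 8 / ε := by
    rw [ge_iff_le, show (8 : ℝ) / ε = Real.sqrt ((8 / ε) ^ 2) by
      rw [Real.sqrt_sq (by positivity)]]
    apply Real.sqrt_le_sqrt
    calc (8 / ε) ^ 2 = 64 / ε ^ 2 := by ring
      _ ≤ L := hL1
  have key : Real.log 4 + 4 * Real.sqrt L ≤ ε * L := by
    have h4 : 4 * Real.sqrt L ≤ (ε / 2) * L := by
      have : 4 * Real.sqrt L ≤ (ε / 2) * Real.sqrt L * Real.sqrt L := by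
        have h8 : (8 : ℝ) / ε ≤ Real.sqrt L := hsqrt
        have : 4 ≤ (ε / 2) * Real.sqrt L := by
          rw [show (4:ℝ) = (ε/2) * (8/ε) by field_simp; ring]
          exact mul_le_mul_of_nonneg_left h8 (by positivity)
        nlinarith [Real.sqrt_nonneg L]
      rwa [mul_assoc, Real.mul_self_sqrt hLpos.le] at this
    have hlog4 : Real.log 4 ≤ (ε / 2) * L := by
      have hexp2 : (4 : ℝ) ≤ Real.exp 2 := by
        rw [show (2:ℝ) = 1 + 1 by norm_num, Real.exp_add]
        nlinarith [Real.exp_one_gt_d9]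
      have h42 : Real.log 4 ≤ 2 := by
        calc Real.log 4 ≤ Real.log (Real.exp 2) :=
              Real.log_le_log (by norm_num) hexp2
          _ = 2 := Real.log_exp 2
      have hmul : (ε / 2) * (4 / ε) ≤ (ε / 2) * L :=
        mul_le_mul_of_nonneg_left hL2 (by positivity)
      have heq : (ε / 2) * (4 / ε) = 2 := by field_simp; ring
      linarith
    linarith
  -- set up the Salem-Spencer set
  set N : ℕ := d / 2 with hN
  obtain ⟨S, hSsub, hScard, hSfree⟩ := rothNumberNat_spec N
  have h2N : 2 * N ≤ d := by omega
  have hNd : N ≤ d := by omega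
  have hNpos : 0 < N := by omega
  have hSlt : ∀ x ∈ S, x < N := fun x hx => Finset.mem_range.mp (hSsub hx)
  refine ⟨((S.image (fun x : ℕ => (x : ZMod d))) : Set (ZMod d)), ?_, ?_⟩
  · -- cardinality bound
    have hinj : Set.InjOn (fun x : ℕ => (x : ZMod d)) S := by
      intro x hx y hy hxy
      have hx' : x < d := lt_of_lt_of_le (hSlt x hx) hNd
      have hy' : y < d := lt_of_lt_of_le (hSlt y hy) hNd
      have := congrArg ZMod.val hxy
      rwa [ZMod.val_cast_of_lt hx', ZMod.val_cast_of_lt hy'] at this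
    have hcard : Nat.card ((S.image (fun x : ℕ => (x : ZMod d))) : Set (ZMod d))
        = rothNumberNat N := by
      rw [Nat.card_coe_set_eq, Set.ncard_coe_finset,
        Finset.card_image_of_injOn hinj, hScard]
    rw [hcard]
    have hbeh : (N : ℝ) * Real.exp (-4 * Real.sqrt (Real.log N)) ≤ rothNumberNat N :=
      Behrend.roth_lower_bound
    have hNge : (d : ℝ) / 4 ≤ (N : ℝ) := by
      have : d ≤ 4 * N := by omega
      have := (Nat.cast_le (α := ℝ)).mpr this
      push_cast at this
      linarith
    have hsqle : Real.sqrt (Real.log N) ≤ Real.sqrt L := by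
      apply Real.sqrt_le_sqrt
      exact Real.log_le_log (by exact_mod_cast hNpos) (by exact_mod_cast hNd)
    have hexple : Real.exp (-4 * Real.sqrt L) ≤ Real.exp (-4 * Real.sqrt (Real.log N)) := by
      apply Real.exp_le_exp.mpr; linarith
    have hchain : (d : ℝ) / 4 * Real.exp (-4 * Real.sqrt L) ≤
        (N : ℝ) * Real.exp (-4 * Real.sqrt (Real.log N)) :=
      mul_le_mul hNge hexple (Real.exp_pos _).le (Nat.cast_nonneg N)
    refine le_trans ?_ (le_trans hchain hbeh)
    rw [Real.rpow_def_of_pos hdpos]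
    have hd4 : (d : ℝ) / 4 * Real.exp (-4 * Real.sqrt L) =
        Real.exp (L - Real.log 4 - 4 * Real.sqrt L) := by
      rw [show L - Real.log 4 - 4 * Real.sqrt L = (L - Real.log 4) + (-4 * Real.sqrt L) by ring,
        Real.exp_add, Real.exp_sub, Real.exp_log hdpos, Real.exp_log (by norm_num : (0:ℝ) < 4)]
    rw [hd4]
    apply Real.exp_le_exp.mpr
    have : Real.log d * (1 - ε) = L - ε * L := by rw [← hL]; ring
    rw [this]
    linarith
  · -- no nontrivial 3-APs
    intro n r hn hnr hnrr
    simp only [Finset.coe_image, Set.mem_image, Finset.mem_coe] at hn hnr hnrr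
    obtain ⟨x, hxS, hx⟩ := hn
    obtain ⟨y, hyS, hy⟩ := hnr
    obtain ⟨z, hzS, hz⟩ := hnrr
    have hzmod : ((x + z : ℕ) : ZMod d) = ((y + y : ℕ) : ZMod d) := by
      push_cast
      rw [hx, hy, hz]; ring
    have hnat : x + z = y + y := by
      have hxz : x + z < d := by
        have := hSlt x hxS; have := hSlt z hzS; omega
      have hyy : y + y < d := by
        have := hSlt y hyS; omega
      have := congrArg ZMod.val hzmod
      rwa [ZMod.val_cast_of_lt hxz, ZMod.val_cast_of_lt hyy] at this
    have hxy : x = y := hSfree hxS hyS hzS hnat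
    have : n + r = n + 0 := by
      rw [add_zero, ← hy, ← hxy, hx]
    exact add_left_cancel this
end

section
/- Let d be divisible by 3, ω = exp(2πi/3), E ⊆ Z/dZ, and define A(j,k) = 1_E(j)·1_E(k) + 1_E(j)·ω^(−j)·1_E(k)·ω^k. Then A is a positive semi-definite Hermitian matrix, and the sum over n, r ∈ Z/dZ of A(n,n+r)·A(n+r,n+2r)·A(n+2r,n) equals the sum over pairs (n,r) with n, n+r, n+2r ∈ E of (1+ω^r)²(1+ω^(−2r)), where the summand equals 8 when 3 | r and −1 otherwise. -/
open ComplexOrder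

noncomputable def ww : ℂ := Complex.exp (2 * Real.pi * Complex.I / 3)

lemma ww_ne_zero : ww ≠ 0 := Complex.exp_ne_zero _

lemma ww_pow_three : ww ^ (3:ℕ) = 1 := by
  rw [ww, ← Complex.exp_nat_mul,
    show ((3:ℕ):ℂ) * (2 * Real.pi * Complex.I / 3) = 2 * Real.pi * Complex.I by
      push_cast; ring,
    Complex.exp_two_pi_mul_I]

lemma ww_ne_one : ww ≠ 1 := by
  intro h
  rw [ww, Complex.exp_eq_one_iff] at h
  obtain ⟨n, hn⟩ := h
  have hπ : (Real.pi : ℂ) ≠ 0 := by exact_mod_cast Real.pi_ne_zero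
  have h2 : (2 * Real.pi * Complex.I : ℂ) ≠ 0 := by
    simp [hπ, Complex.I_ne_zero]
  field_simp at hn
  have h1 : (1:ℂ) * (2 * Real.pi * Complex.I) = (3 * n) * (2 * Real.pi * Complex.I) := by
    linear_combination (2 * Real.pi * Complex.I) * hn
  have h1' : (1:ℂ) = 3 * n := mul_right_cancel₀ h2 h1
  have : ((3*n:ℤ):ℂ) = ((1:ℤ):ℂ) := by push_cast; linear_combination -h1'
  have := Int.cast_injective (α := ℂ) this
  omega

lemma ww_sum : 1 + ww + ww^2 = 0 := by
  have h := ww_pow_three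
  have hne := sub_ne_zero.mpr ww_ne_one
  have hz : (ww - 1) * (1 + ww + ww^2) = 0 := by linear_combination h
  rcases mul_eq_zero.mp hz with h' | h'
  · exact absurd h' hne
  · exact h'

lemma ww_zpow_three : ww ^ (3:ℤ) = 1 := by
  rw [show (3:ℤ) = ((3:ℕ):ℤ) by norm_num, zpow_natCast, ww_pow_three]

lemma ww_per (a b : ℤ) (h : (3:ℤ) ∣ (a - b)) : ww ^ a = ww ^ b := by
  obtain ⟨k, hk⟩ := h
  have ha : a = b + 3*k := by omega
  rw [ha, zpow_add₀ ww_ne_zero, zpow_mul, ww_zpow_three, one_zpow, mul_one]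

lemma ww_conj (m : ℤ) : star (ww ^ m) = ww ^ (-m) := by
  show (starRingEnd ℂ) (ww ^ m) = ww ^ (-m)
  rw [map_zpow₀]
  have h : (starRingEnd ℂ) ww = ww⁻¹ := by
    rw [ww, ← Complex.exp_conj, ← Complex.exp_neg]
    congr 1
    have : (starRingEnd ℂ) (2 * ↑Real.pi * Complex.I / 3)
        = -(2 * ↑Real.pi * Complex.I / 3) := by
      simp [map_div₀, Complex.conj_I, map_ofNat]
      ring
    rw [this]
  rw [h, inv_zpow, ← zpow_neg]

/-- For `3 ∣ d`, `ω = exp(2πi/3)`, `E ⊆ ℤ/dℤ` and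
`A(j,k) = 1_E(j) 1_E(k) + 1_E(j) ω^{-j} 1_E(k) ω^{k}`, the matrix `A` is positive
semi-definite and Hermitian, the restricted third moment equals the sum over
progressions `n, n+r, n+2r ∈ E` of `(1+ω^r)²(1+ω^{-2r})`, and this summand equals
`8` when `3 ∣ r` and `-1` otherwise. -/
theorem statement5 (d : ℕ) [NeZero d] (h3 : 3 ∣ d) (E : Finset (ZMod d))
    (A : Matrix (ZMod d) (ZMod d) ℂ)
    (hA : ∀ j k : ZMod d, A j k =
      (if j ∈ E then (1 : ℂ) else 0) * (if k ∈ E then (1 : ℂ) else 0) +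
      ((if j ∈ E then (1 : ℂ) else 0) * Complex.exp (2 * Real.pi * Complex.I / 3) ^ (-(j.val : ℤ))) *
      ((if k ∈ E then (1 : ℂ) else 0) * Complex.exp (2 * Real.pi * Complex.I / 3) ^ ((k.val : ℤ)))) :
    A.PosSemidef ∧ A.IsHermitian ∧
    (∑ n : ZMod d, ∑ r : ZMod d,
        A n (n + r) * A (n + r) (n + 2 * r) * A (n + 2 * r) n)
      = (∑ n : ZMod d, ∑ r : ZMod d,
          if n ∈ E ∧ n + r ∈ E ∧ n + 2 * r ∈ E then
            (1 + Complex.exp (2 * Real.pi * Complex.I / 3) ^ ((r.val : ℤ))) ^ 2 *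
              (1 + Complex.exp (2 * Real.pi * Complex.I / 3) ^ (-(2 * (r.val : ℤ))))
          else 0) ∧
    (∀ r : ZMod d,
      (1 + Complex.exp (2 * Real.pi * Complex.I / 3) ^ ((r.val : ℤ))) ^ 2 *
          (1 + Complex.exp (2 * Real.pi * Complex.I / 3) ^ (-(2 * (r.val : ℤ))))
        = if 3 ∣ r.val then 8 else -1) := by
  have hw : Complex.exp (2 * Real.pi * Complex.I / 3) = ww := rfl
  rw [hw] at hA
  rw [hw]
  -- divisibility helper
  have hadd : ∀ x y : ZMod d, (3:ℤ) ∣ (((x+y).val:ℤ) - (x.val:ℤ) - (y.val:ℤ)) := by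
    intro x y
    have hd : ((d:ℤ)) ∣ (((x+y).val:ℤ) - (x.val:ℤ) - (y.val:ℤ)) := by
      rw [ZMod.val_add]
      refine ⟨-(((x.val:ℤ)+(y.val:ℤ))/d), ?_⟩
      push_cast [Int.natCast_mod]
      rw [Int.emod_def]
      ring
    exact dvd_trans (by exact_mod_cast h3) hd
  -- factored form of A
  have hA' : ∀ j k : ZMod d, A j k =
      (if j ∈ E then (1:ℂ) else 0) * (if k ∈ E then (1:ℂ) else 0) *
        (1 + ww ^ ((k.val:ℤ) - (j.val:ℤ))) := by
    intro j k
    rw [hA j k,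
      show ((k.val:ℤ) - (j.val:ℤ)) = (k.val:ℤ) + (-(j.val:ℤ)) by ring,
      zpow_add₀ ww_ne_zero]
    ring
  -- PSD via Gram factorization
  have hB : ∃ B : Matrix (ZMod d) (Fin 2) ℂ, A = B * B.conjTranspose := by
    refine ⟨Matrix.of fun j i => if i = 0 then (if j ∈ E then (1:ℂ) else 0)
      else (if j ∈ E then (1:ℂ) else 0) * ww ^ (-(j.val:ℤ)), ?_⟩
    ext j k
    rw [Matrix.mul_apply, Fin.sum_univ_two, Matrix.conjTranspose_apply,
      Matrix.conjTranspose_apply, Matrix.of_apply, Matrix.of_apply,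
      Matrix.of_apply, Matrix.of_apply, if_pos rfl, if_pos rfl,
      if_neg (by decide : ¬ (1:Fin 2) = 0), if_neg (by decide : ¬ (1:Fin 2) = 0)]
    have hsu : star (if k ∈ E then (1:ℂ) else 0) = (if k ∈ E then (1:ℂ) else 0) := by
      split <;> simp
    rw [hA j k, star_mul', hsu, ww_conj, neg_neg]
  obtain ⟨B, hAB⟩ := hB
  have hPSD : A.PosSemidef := hAB ▸ Matrix.posSemidef_self_mul_conjTranspose B
  refine ⟨hPSD, hPSD.isHermitian, ?_, ?_⟩
  · refine Finset.sum_congr rfl fun n _ => Finset.sum_congr rfl fun r _ => ?_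
    rw [hA' n (n+r), hA' (n+r) (n+2*r), hA' (n+2*r) n]
    by_cases h1 : n ∈ E
    · by_cases h2 : n+r ∈ E
      · by_cases h3' : n+2*r ∈ E
        · rw [if_pos h1, if_pos h2, if_pos h3', if_pos (⟨h1,h2,h3'⟩ : n ∈ E ∧ n+r ∈ E ∧ n+2*r ∈ E)]
          have htwo : n + 2*r = (n+r) + r := by ring
          have e1 : ww ^ (((n+r).val:ℤ) - (n.val:ℤ)) = ww ^ ((r.val:ℤ)) := by
            apply ww_per; have := hadd n r; omega
          have e2 : ww ^ (((n+2*r).val:ℤ) - ((n+r).val:ℤ)) = ww ^ ((r.val:ℤ)) := by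
            apply ww_per; rw [htwo]; have := hadd (n+r) r; omega
          have e3 : ww ^ ((n.val:ℤ) - ((n+2*r).val:ℤ)) = ww ^ (-(2*(r.val:ℤ))) := by
            apply ww_per; rw [htwo]
            have ha := hadd (n+r) r; have hb := hadd n r; omega
          rw [e1, e2, e3]; ring
        · simp [h1, h2, h3']
      · simp [h1, h2]
    · simp [h1]
  · intro r
    have hs := ww_sum
    have hc := ww_pow_three
    rcases (by omega : r.val % 3 = 0 ∨ r.val % 3 = 1 ∨ r.val % 3 = 2) with h|h|h
    · rw [if_pos (by omega), ww_per ((r.val:ℤ)) 0 (by omega),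
        ww_per (-(2*(r.val:ℤ))) 0 (by omega), zpow_zero]
      norm_num
    · rw [if_neg (by omega), ww_per ((r.val:ℤ)) 1 (by omega),
        ww_per (-(2*(r.val:ℤ))) 1 (by omega), zpow_one]
      linear_combination hc + 3*hs
    · rw [if_neg (by omega), ww_per ((r.val:ℤ)) 2 (by omega),
        ww_per (-(2*(r.val:ℤ))) 2 (by omega),
        show ((2:ℤ)) = ((2:ℕ):ℤ) by norm_num, zpow_natCast]
      linear_combination (ww^3 + 1 + 3*ww) * hc + 3*hs
end

section
/- Let G be a group, T : G → G an automorphism, and e₀, e₁, e₂ ∈ G. Suppose that e₀·(T^r e₁)·(T^{2r} e₂) = 1 holds for all r in a set A ⊆ Z. If r, r+h, r', r'+h ∈ A, T^{r'−r} has no fixed points other than the identity, and T^{2h} has no fixed points other than the identity, then e₂ = 1. -/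
/-- Degeneracy of length-three progression relations: if `e₀ (Tʳ e₁) (T²ʳ e₂) = 1`
for all `r` in a set `A ⊆ ℤ` containing a parallelogram `r, r+h, r', r'+h`, and
the powers `T^{r'-r}` and `T^{2h}` have no nontrivial fixed points, then `e₂ = 1`. -/
theorem statement7 {G : Type*} [Group G] (T : MulAut G) (e₀ e₁ e₂ : G)
    (A : Set ℤ)
    (hrel : ∀ r ∈ A, e₀ * (T ^ r) e₁ * (T ^ (2 * r)) e₂ = 1)
    (r h r' : ℤ)
    (hr : r ∈ A) (hrh : r + h ∈ A) (hr' : r' ∈ A) (hr'h : r' + h ∈ A)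
    (hfix1 : ∀ g : G, (T ^ (r' - r)) g = g → g = 1)
    (hfix2 : ∀ g : G, (T ^ (2 * h)) g = g → g = 1) :
    e₂ = 1 := by
  set v : G := (T ^ (2 * h)) e₂ * e₂⁻¹ with hv
  have comp : ∀ (a b : ℤ) (g : G), (T ^ (a + b)) g = (T ^ a) ((T ^ b) g) := by
    intro a b g
    rw [zpow_add, MulAut.mul_apply]
  have key : ∀ s : ℤ, s ∈ A → s + h ∈ A → (T ^ s) v = ((T ^ h) e₁)⁻¹ * e₁ := by
    intro s hs hsh
    have h1 := hrel s hs
    have h2 := hrel (s + h) hsh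
    rw [mul_assoc] at h1 h2
    have ha : (T ^ s) e₁ * (T ^ (2 * s)) e₂ = e₀⁻¹ := eq_inv_of_mul_eq_one_right h1
    have hb : (T ^ (s + h)) e₁ * (T ^ (2 * (s + h))) e₂ = e₀⁻¹ :=
      eq_inv_of_mul_eq_one_right h2
    have e1 := ha.trans hb.symm
    have hc : (T ^ (s + h)) e₁ = (T ^ s) ((T ^ h) e₁) := comp s h e₁
    have hd : (T ^ (2 * (s + h))) e₂ = (T ^ (2 * s)) ((T ^ (2 * h)) e₂) := by
      rw [mul_add, comp]
    rw [hc, hd] at e1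
    have e3 : (T ^ s) (((T ^ h) e₁)⁻¹ * e₁) = (T ^ s) ((T ^ s) v) := by
      have lhs : (T ^ s) (((T ^ h) e₁)⁻¹ * e₁) = ((T ^ s) ((T ^ h) e₁))⁻¹ * (T ^ s) e₁ := by
        rw [map_mul, map_inv]
      have rhs : (T ^ s) ((T ^ s) v)
          = (T ^ (2 * s)) ((T ^ (2 * h)) e₂) * ((T ^ (2 * s)) e₂)⁻¹ := by
        rw [← comp, show s + s = 2 * s from (two_mul s).symm, hv, map_mul, map_inv]
      rw [lhs, rhs, inv_mul_eq_iff_eq_mul, ← mul_assoc, ← e1, mul_inv_cancel_right]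
    exact ((T ^ s).injective e3).symm
  have k1 := key r hr hrh
  have k2 := key r' hr' hr'h
  have k3 : (T ^ r') v = (T ^ r) v := k2.trans k1.symm
  have k4 : (T ^ (r' - r)) v = v := by
    have : (T ^ r) ((T ^ (r' - r)) v) = (T ^ r) v := by
      rw [← comp, add_sub_cancel, k3]
    exact (T ^ r).injective this
  have hv1 : v = 1 := hfix1 v k4
  have : (T ^ (2 * h)) e₂ = e₂ := by
    have := hv1
    rw [hv, mul_inv_eq_one] at this
    exact this
  exact hfix2 e₂ this
end

section
/- Let H be a Hilbert space and (u_n) a bounded sequence in H. Suppose that for each h ≥ 1 the limit γ_h = lim_{N→∞} |(1/N) Σ_{n=1}^N ⟨u_n, u_{n+h}⟩| exists, and that (1/H) Σ_{h=1}^H γ_h → 0 as H → ∞. Then (1/N) Σ_{n=1}^N u_n → 0 in norm. -/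
open Finset

lemma vdc_shift {E : Type*} [NormedAddCommGroup E] (f : ℕ → E) (B : ℝ)
    (hf : ∀ n, ‖f n‖ ≤ B) (a N : ℕ) :
    ‖(∑ n ∈ Finset.Icc 1 N, f (n + a)) - ∑ n ∈ Finset.Icc 1 N, f n‖ ≤ 2 * a * B := by
  have hB : ∀ m n : ℕ, ‖∑ i ∈ Finset.Ico m n, f (1 + i)‖ ≤ ((n - m : ℕ) : ℝ) * B := by
    intro m n
    calc ‖∑ i ∈ Finset.Ico m n, f (1 + i)‖ ≤ ∑ i ∈ Finset.Ico m n, ‖f (1 + i)‖ :=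
          norm_sum_le _ _
      _ ≤ ∑ _i ∈ Finset.Ico m n, B := Finset.sum_le_sum fun i _ => hf _
      _ = ((n - m : ℕ) : ℝ) * B := by rw [Finset.sum_const, Nat.card_Ico, nsmul_eq_mul]
  have e1 : ∑ n ∈ Finset.Icc 1 N, f n = ∑ i ∈ Finset.range N, f (1 + i) := by
    rw [← Finset.Ico_add_one_right_eq_Icc, Finset.sum_Ico_eq_sum_range]
    simp
  have e2 : ∑ n ∈ Finset.Icc 1 N, f (n + a) = ∑ i ∈ Finset.Ico a (a + N), f (1 + i) := by
    rw [← Finset.Ico_add_one_right_eq_Icc, Finset.sum_Ico_eq_sum_range, Finset.sum_Ico_eq_sum_range]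
    apply Finset.sum_congr (by congr 1 <;> omega)
    intro i _
    congr 1
    omega
  have h1 : ∑ i ∈ Finset.Ico 0 a, f (1 + i) + ∑ i ∈ Finset.Ico a (a + N), f (1 + i)
      = ∑ i ∈ Finset.Ico 0 N, f (1 + i) + ∑ i ∈ Finset.Ico N (a + N), f (1 + i) := by
    rw [Finset.sum_Ico_consecutive _ (Nat.zero_le a) (Nat.le_add_right a N),
      Finset.sum_Ico_consecutive _ (Nat.zero_le N) (Nat.le_add_left N a)]
  have h2 : ∑ i ∈ Finset.Ico a (a + N), f (1 + i) - ∑ i ∈ Finset.range N, f (1 + i)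
      = ∑ i ∈ Finset.Ico N (a + N), f (1 + i) - ∑ i ∈ Finset.Ico 0 a, f (1 + i) := by
    rw [← Nat.Ico_zero_eq_range, sub_eq_sub_iff_add_eq_add, add_comm,
      add_comm (∑ i ∈ Finset.Ico N (a + N), f (1 + i))]
    exact h1
  rw [e1, e2, h2]
  calc ‖∑ i ∈ Finset.Ico N (a + N), f (1 + i) - ∑ i ∈ Finset.Ico 0 a, f (1 + i)‖
      ≤ ‖∑ i ∈ Finset.Ico N (a + N), f (1 + i)‖ + ‖∑ i ∈ Finset.Ico 0 a, f (1 + i)‖ :=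
        norm_sub_le _ _
    _ ≤ ((a + N - N : ℕ) : ℝ) * B + ((a - 0 : ℕ) : ℝ) * B := add_le_add (hB _ _) (hB _ _)
    _ = 2 * a * B := by
        rw [show a + N - N = a by omega, Nat.sub_zero]
        ring

lemma vdc_offdiag (K h : ℕ) (hh : h < K) (G g : ℕ → ℝ) (hg : ∀ d, 0 ≤ g d)
    (hlt : ∀ h', h' < h → G h' ≤ g (h - h')) (hgt : ∀ h', h < h' → G h' ≤ g (h' - h)) :
    ∑ h' ∈ Finset.range K, G h' ≤ G h + 2 * ∑ d ∈ Finset.Icc 1 (K - 1), g d := by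
  have hsplit : ∑ h' ∈ Finset.range K, G h'
      = (∑ h' ∈ Finset.range h, G h' + G h) + ∑ h' ∈ Finset.Ico (h + 1) K, G h' := by
    rw [← Nat.Ico_zero_eq_range, ← Finset.sum_Ico_consecutive G (Nat.zero_le (h + 1)) hh,
      Nat.Ico_zero_eq_range, Finset.sum_range_succ]
  have sub1 : ∀ m : ℕ, m ≤ K - 1 →
      ∑ d ∈ Finset.Icc 1 m, g d ≤ ∑ d ∈ Finset.Icc 1 (K - 1), g d := fun m hm =>
    Finset.sum_le_sum_of_subset_of_nonneg (Finset.Icc_subset_Icc_right hm) fun i _ _ => hg i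
  have b1 : ∑ h' ∈ Finset.range h, G h' ≤ ∑ d ∈ Finset.Icc 1 (K - 1), g d := by
    calc ∑ h' ∈ Finset.range h, G h' ≤ ∑ h' ∈ Finset.range h, g (h - h') :=
          Finset.sum_le_sum fun i hi => hlt i (Finset.mem_range.mp hi)
      _ = ∑ d ∈ Finset.Icc 1 h, g d := by
          rw [← Finset.Ico_add_one_right_eq_Icc, Finset.sum_Ico_eq_sum_range,
            ← Finset.sum_range_reflect (fun i => g (1 + i)) (h + 1 - 1)]
          apply Finset.sum_congr (by norm_num)
          intro i hi
          have := Finset.mem_range.mp hi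
          congr 1
          omega
      _ ≤ _ := sub1 h (by omega)
  have b2 : ∑ h' ∈ Finset.Ico (h + 1) K, G h' ≤ ∑ d ∈ Finset.Icc 1 (K - 1), g d := by
    calc ∑ h' ∈ Finset.Ico (h + 1) K, G h' ≤ ∑ h' ∈ Finset.Ico (h + 1) K, g (h' - h) :=
          Finset.sum_le_sum fun i hi => hgt i (by have := (Finset.mem_Ico.mp hi).1; omega)
      _ = ∑ d ∈ Finset.Icc 1 (K - 1 - h), g d := by
          rw [Finset.sum_Ico_eq_sum_range, ← Finset.Ico_add_one_right_eq_Icc, Finset.sum_Ico_eq_sum_range]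
          apply Finset.sum_congr (by congr 1; omega)
          intro i hi
          congr 1
          omega
      _ ≤ _ := sub1 _ (by omega)
  rw [hsplit]
  linarith

lemma vdc_key {H : Type*} [NormedAddCommGroup H] [InnerProductSpace ℂ H]
    (u : ℕ → H) (C : ℝ) (hC : 0 ≤ C) (hbound : ∀ n, ‖u n‖ ≤ C)
    (K N : ℕ) (hK : 1 ≤ K) (hN : 1 ≤ N) :
    ‖(N : ℝ)⁻¹ • ∑ n ∈ Finset.Icc 1 N, (K : ℝ)⁻¹ • ∑ h ∈ Finset.range K, u (n + h)‖ ^ 2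
      ≤ C ^ 2 / K
        + 2 / K * ∑ d ∈ Finset.Icc 1 (K - 1),
            ‖(N : ℂ)⁻¹ * ∑ n ∈ Finset.Icc 1 N, (inner ℂ (u n) (u (n + d)) : ℂ)‖
        + 4 * K * C ^ 2 / N := by
  have hKpos : (0:ℝ) < K := by exact_mod_cast hK
  have hNpos : (0:ℝ) < N := by exact_mod_cast hN
  set Q : ℕ → ℂ := fun d => ∑ n ∈ Finset.Icc 1 N, (inner ℂ (u n) (u (n + d)) : ℂ) with hQ
  set P : ℕ → ℕ → ℂ :=
    fun h h' => ∑ n ∈ Finset.Icc 1 N, (inner ℂ (u (n + h)) (u (n + h')) : ℂ) with hP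
  have hinner : ∀ m m' : ℕ, ‖(inner ℂ (u m) (u m') : ℂ)‖ ≤ C ^ 2 := by
    intro m m'
    calc ‖(inner ℂ (u m) (u m') : ℂ)‖ ≤ ‖u m‖ * ‖u m'‖ := norm_inner_le_norm _ _
      _ ≤ C * C := mul_le_mul (hbound m) (hbound m') (norm_nonneg _) hC
      _ = C ^ 2 := (sq C).symm
  -- shift bound for strictly upper pairs
  have hPshift : ∀ h h', h < h' → h < K → ‖P h h'‖ ≤ ‖Q (h' - h)‖ + 2 * K * C ^ 2 := by
    intro h h' hhh hhK
    set d := h' - h with hd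
    have hw : P h h' = ∑ n ∈ Finset.Icc 1 N, (inner ℂ (u (n + h)) (u (n + h + d)) : ℂ) := by
      rw [hP]
      apply Finset.sum_congr rfl
      intro n _
      have hd' : n + h' = n + h + d := by omega
      rw [hd']
    have hdiff := vdc_shift (fun m => (inner ℂ (u m) (u (m + d)) : ℂ)) (C ^ 2)
      (fun m => hinner m (m + d)) h N
    have heq : P h h' = Q d + ((∑ n ∈ Finset.Icc 1 N, (inner ℂ (u (n + h)) (u (n + h + d)) : ℂ))
        - ∑ n ∈ Finset.Icc 1 N, (inner ℂ (u n) (u (n + d)) : ℂ)) := by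
      rw [hw, hQ]; ring
    have hhK' : (h:ℝ) ≤ K := by exact_mod_cast hhK.le
    calc ‖P h h'‖ ≤ ‖Q d‖ + ‖(∑ n ∈ Finset.Icc 1 N, (inner ℂ (u (n + h)) (u (n + h + d)) : ℂ))
          - ∑ n ∈ Finset.Icc 1 N, (inner ℂ (u n) (u (n + d)) : ℂ)‖ := by
          rw [heq]; exact norm_add_le _ _
      _ ≤ ‖Q d‖ + 2 * h * C ^ 2 := add_le_add_right hdiff _
      _ ≤ ‖Q d‖ + 2 * K * C ^ 2 := by nlinarith [sq_nonneg C]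
  -- conjugate symmetry
  have hPconj : ∀ h h', P h' h = starRingEnd ℂ (P h h') := by
    intro h h'
    rw [hP, map_sum]
    exact Finset.sum_congr rfl fun n _ => (inner_conj_symm _ _).symm
  -- diagonal bound
  have hPdiag : ∀ h : ℕ, (P h h).re ≤ N * C ^ 2 := by
    intro h
    rw [hP, Complex.re_sum]
    calc ∑ n ∈ Finset.Icc 1 N, (inner ℂ (u (n + h)) (u (n + h)) : ℂ).re
        ≤ ∑ n ∈ Finset.Icc 1 N, C ^ 2 := by
          apply Finset.sum_le_sum
          intro n _
          calc (inner ℂ (u (n + h)) (u (n + h)) : ℂ).re ≤ ‖(inner ℂ (u (n + h)) (u (n + h)) : ℂ)‖ :=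
                Complex.re_le_norm _
            _ ≤ C ^ 2 := hinner _ _
      _ = N * C ^ 2 := by rw [Finset.sum_const, Nat.card_Icc, nsmul_eq_mul]; norm_num
  -- row bound
  have hrow : ∀ h, h < K → ∑ h' ∈ Finset.range K, (P h h').re
      ≤ N * C ^ 2 + 2 * ∑ d ∈ Finset.Icc 1 (K - 1), (‖Q d‖ + 2 * K * C ^ 2) := by
    intro h hh
    have := vdc_offdiag K h hh (fun h' => (P h h').re) (fun d => ‖Q d‖ + 2 * K * C ^ 2)
      (fun d => by positivity)
      (fun h' hh' => by
        show (P h h').re ≤ ‖Q (h - h')‖ + 2 * ↑K * C ^ 2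
        have : (P h h').re = (P h' h).re := by rw [hPconj h' h, Complex.conj_re]
        rw [this]
        exact le_trans (Complex.re_le_norm _) (hPshift h' h hh' (lt_trans hh' hh)))
      (fun h' hh' => by
        show (P h h').re ≤ ‖Q (h' - h)‖ + 2 * ↑K * C ^ 2
        exact le_trans (Complex.re_le_norm _) (hPshift h h' hh' hh))
    exact le_trans this (add_le_add_left (hPdiag h) _)
  -- total bound
  set W : ℝ := ∑ d ∈ Finset.Icc 1 (K - 1), ‖Q d‖ with hW
  have hWnn : 0 ≤ W := Finset.sum_nonneg fun d _ => norm_nonneg _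
  set km : ℝ := ((K - 1 : ℕ) : ℝ) with hkm
  have hkmK : km ≤ K := by rw [hkm]; exact_mod_cast Nat.sub_le K 1
  have hkmnn : (0:ℝ) ≤ km := by positivity
  have htot : ∑ h ∈ Finset.range K, ∑ h' ∈ Finset.range K, (P h h').re
      ≤ K * (N * C ^ 2 + 2 * (W + km * (2 * K * C ^ 2))) := by
    have hc : ∑ d ∈ Finset.Icc 1 (K - 1), (‖Q d‖ + 2 * K * C ^ 2)
        = W + km * (2 * K * C ^ 2) := by
      rw [Finset.sum_add_distrib, hW, Finset.sum_const, Nat.card_Icc, nsmul_eq_mul, hkm]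
      norm_num
    calc ∑ h ∈ Finset.range K, ∑ h' ∈ Finset.range K, (P h h').re
        ≤ ∑ _h ∈ Finset.range K, (N * C ^ 2 + 2 * (W + km * (2 * K * C ^ 2))) := by
          apply Finset.sum_le_sum
          intro h hh
          rw [← hc]
          exact hrow h (Finset.mem_range.mp hh)
      _ = K * (N * C ^ 2 + 2 * (W + km * (2 * K * C ^ 2))) := by
          rw [Finset.sum_const, Finset.card_range, nsmul_eq_mul]
  -- expansion of the square norm
  set vn : ℕ → H := fun n => ∑ h ∈ Finset.range K, u (n + h) with hvn
  have hexpand : ∑ n ∈ Finset.Icc 1 N, ‖vn n‖ ^ 2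
      = ∑ h ∈ Finset.range K, ∑ h' ∈ Finset.range K, (P h h').re := by
    have h1 : ∀ n : ℕ, ‖vn n‖ ^ 2
        = ∑ h ∈ Finset.range K, ∑ h' ∈ Finset.range K,
            (inner ℂ (u (n + h)) (u (n + h')) : ℂ).re := by
      intro n
      rw [← inner_self_eq_norm_sq (𝕜 := ℂ) (vn n), hvn]
      simp only [sum_inner, inner_sum, RCLike.re_to_complex, Complex.re_sum]
      rw [Finset.sum_comm]
    rw [Finset.sum_congr rfl fun n _ => h1 n, Finset.sum_comm]
    apply Finset.sum_congr rfl
    intro h _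
    rw [Finset.sum_comm]
    apply Finset.sum_congr rfl
    intro h' _
    rw [hP, Complex.re_sum]
  -- norm bound
  have hnorm : ‖(N : ℝ)⁻¹ • ∑ n ∈ Finset.Icc 1 N, (K : ℝ)⁻¹ • vn n‖ ^ 2
      ≤ (N : ℝ)⁻¹ * (K : ℝ)⁻¹ ^ 2 * ∑ h ∈ Finset.range K, ∑ h' ∈ Finset.range K, (P h h').re := by
    rw [← hexpand]
    have e1 : ∑ n ∈ Finset.Icc 1 N, (K : ℝ)⁻¹ • vn n
        = (K : ℝ)⁻¹ • ∑ n ∈ Finset.Icc 1 N, vn n := (Finset.smul_sum).symm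
    rw [e1, norm_smul, norm_smul, Real.norm_eq_abs, Real.norm_eq_abs,
      abs_of_nonneg (by positivity : (0:ℝ) ≤ (N:ℝ)⁻¹),
      abs_of_nonneg (by positivity : (0:ℝ) ≤ (K:ℝ)⁻¹)]
    have e2 : ‖∑ n ∈ Finset.Icc 1 N, vn n‖ ^ 2 ≤ N * ∑ n ∈ Finset.Icc 1 N, ‖vn n‖ ^ 2 := by
      calc ‖∑ n ∈ Finset.Icc 1 N, vn n‖ ^ 2 ≤ (∑ n ∈ Finset.Icc 1 N, ‖vn n‖) ^ 2 := by
            apply pow_le_pow_left₀ (norm_nonneg _) (norm_sum_le _ _)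
        _ ≤ (Finset.Icc 1 N).card * ∑ n ∈ Finset.Icc 1 N, ‖vn n‖ ^ 2 :=
            sq_sum_le_card_mul_sum_sq
        _ = N * ∑ n ∈ Finset.Icc 1 N, ‖vn n‖ ^ 2 := by
            rw [Nat.card_Icc]; norm_num
    calc ((N:ℝ)⁻¹ * ((K:ℝ)⁻¹ * ‖∑ n ∈ Finset.Icc 1 N, vn n‖)) ^ 2
        = (N:ℝ)⁻¹ ^ 2 * (K:ℝ)⁻¹ ^ 2 * ‖∑ n ∈ Finset.Icc 1 N, vn n‖ ^ 2 := by ring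
      _ ≤ (N:ℝ)⁻¹ ^ 2 * (K:ℝ)⁻¹ ^ 2 * (N * ∑ n ∈ Finset.Icc 1 N, ‖vn n‖ ^ 2) := by
          apply mul_le_mul_of_nonneg_left e2 (by positivity)
      _ = (N : ℝ)⁻¹ * (K : ℝ)⁻¹ ^ 2 * ∑ n ∈ Finset.Icc 1 N, ‖vn n‖ ^ 2 := by
          field_simp
  -- rewrite the RHS sum
  have h3 : ∑ d ∈ Finset.Icc 1 (K - 1), ‖(N : ℂ)⁻¹ * Q d‖ = (N : ℝ)⁻¹ * W := by
    rw [hW, Finset.mul_sum]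
    apply Finset.sum_congr rfl
    intro d _
    rw [norm_mul, norm_inv, Complex.norm_natCast]
  calc ‖(N : ℝ)⁻¹ • ∑ n ∈ Finset.Icc 1 N, (K : ℝ)⁻¹ • vn n‖ ^ 2
      ≤ (N : ℝ)⁻¹ * (K : ℝ)⁻¹ ^ 2 * ∑ h ∈ Finset.range K, ∑ h' ∈ Finset.range K, (P h h').re :=
        hnorm
    _ ≤ (N : ℝ)⁻¹ * (K : ℝ)⁻¹ ^ 2 * (K * (N * C ^ 2 + 2 * (W + km * (2 * K * C ^ 2)))) :=
        mul_le_mul_of_nonneg_left htot (by positivity)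
    _ = C ^ 2 / K + 2 / K * ((N : ℝ)⁻¹ * W) + 4 * km * C ^ 2 / N := by
        field_simp
        ring
    _ ≤ C ^ 2 / K + 2 / K * ((N : ℝ)⁻¹ * W) + 4 * K * C ^ 2 / N := by
        have : 4 * km * C ^ 2 / N ≤ 4 * K * C ^ 2 / N := by
          gcongr
        linarith
    _ = C ^ 2 / K + 2 / K * ∑ d ∈ Finset.Icc 1 (K - 1), ‖(N : ℂ)⁻¹ * Q d‖
        + 4 * K * C ^ 2 / N := by rw [h3]

/-- Van der Corput lemma for Hilbert-space-valued sequences: if `(u_n)` is bounded,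
`γ_h = lim_N |（1/N) ∑_{n=1}^N ⟨u_n, u_{n+h}⟩|` exists for each `h ≥ 1` and
`(1/H) ∑_{h=1}^H γ_h → 0`, then `(1/N) ∑_{n=1}^N u_n → 0` in norm. -/
theorem statement11 {H : Type*} [NormedAddCommGroup H] [InnerProductSpace ℂ H]
    (u : ℕ → H) (C : ℝ) (hbound : ∀ n, ‖u n‖ ≤ C)
    (γ : ℕ → ℝ)
    (hγ : ∀ h : ℕ, 1 ≤ h →
      Filter.Tendsto
        (fun N : ℕ => ‖(N : ℂ)⁻¹ * ∑ n ∈ Finset.Icc 1 N, (inner ℂ (u n) (u (n + h)) : ℂ)‖)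
        Filter.atTop (nhds (γ h)))
    (havg : Filter.Tendsto
      (fun H' : ℕ => (H' : ℝ)⁻¹ * ∑ h ∈ Finset.Icc 1 H', γ h)
      Filter.atTop (nhds 0)) :
    Filter.Tendsto (fun N : ℕ => ‖(N : ℝ)⁻¹ • ∑ n ∈ Finset.Icc 1 N, u n‖)
      Filter.atTop (nhds 0) := by
  have hC : 0 ≤ C := le_trans (norm_nonneg _) (hbound 0)
  have hγnn : ∀ h : ℕ, 1 ≤ h → 0 ≤ γ h := fun h hh =>
    ge_of_tendsto (hγ h hh) (Filter.Eventually.of_forall fun N => norm_nonneg _)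
  rw [Metric.tendsto_atTop]
  intro ε hε
  -- choose K
  have hlim : Filter.Tendsto
      (fun K : ℕ => C ^ 2 * (K:ℝ)⁻¹ + 2 * ((K:ℝ)⁻¹ * ∑ h ∈ Finset.Icc 1 K, γ h))
      Filter.atTop (nhds 0) := by
    have h1 := tendsto_inv_atTop_nhds_zero_nat.const_mul (C ^ 2)
    have h2 := havg.const_mul (2:ℝ)
    have h3 := h1.add h2
    simpa using h3
  obtain ⟨K, hK1, hKlt⟩ : ∃ K : ℕ, 1 ≤ K ∧
      C ^ 2 * (K:ℝ)⁻¹ + 2 * ((K:ℝ)⁻¹ * ∑ h ∈ Finset.Icc 1 K, γ h) < ε ^ 2 / 8 := by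
    have h4 := (hlim.eventually_lt_const (show (0:ℝ) < ε ^ 2 / 8 by positivity)).and
      (Filter.eventually_ge_atTop 1)
    obtain ⟨K, h1, h2⟩ := h4.exists
    exact ⟨K, h2, h1⟩
  have hKpos : (0:ℝ) < K := by exact_mod_cast hK1
  -- the limit of the RHS of the key inequality
  set L : ℝ := C ^ 2 / K + 2 / K * ∑ d ∈ Finset.Icc 1 (K - 1), γ d with hLdef
  have hL : L < ε ^ 2 / 8 := by
    have hsub : ∑ d ∈ Finset.Icc 1 (K - 1), γ d ≤ ∑ d ∈ Finset.Icc 1 K, γ d :=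
      Finset.sum_le_sum_of_subset_of_nonneg (Finset.Icc_subset_Icc_right (Nat.sub_le K 1))
        (fun i hi _ => hγnn i (Finset.mem_Icc.mp hi).1)
    calc L ≤ C ^ 2 / K + 2 / K * ∑ d ∈ Finset.Icc 1 K, γ d := by
          rw [hLdef]
          have h2K : (0:ℝ) ≤ 2 / K := by positivity
          nlinarith
      _ = C ^ 2 * (K:ℝ)⁻¹ + 2 * ((K:ℝ)⁻¹ * ∑ h ∈ Finset.Icc 1 K, γ h) := by ring
      _ < ε ^ 2 / 8 := hKlt
  have hFlim : Filter.Tendsto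
      (fun N : ℕ => C ^ 2 / K + 2 / K * ∑ d ∈ Finset.Icc 1 (K - 1),
          ‖(N : ℂ)⁻¹ * ∑ n ∈ Finset.Icc 1 N, (inner ℂ (u n) (u (n + d)) : ℂ)‖
        + 4 * K * C ^ 2 / N)
      Filter.atTop (nhds (L + 0)) := by
    apply Filter.Tendsto.add
    · rw [hLdef]
      exact tendsto_const_nhds.add
        ((tendsto_finset_sum _ fun d hd => hγ d (Finset.mem_Icc.mp hd).1).const_mul _)
    · have h5 := tendsto_inv_atTop_nhds_zero_nat.const_mul (4 * (K:ℝ) * C ^ 2)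
      simp only [mul_zero] at h5
      apply h5.congr
      intro N
      rw [div_eq_mul_inv]
  have hev1 : ∀ᶠ N : ℕ in Filter.atTop,
      C ^ 2 / K + 2 / K * ∑ d ∈ Finset.Icc 1 (K - 1),
          ‖(N : ℂ)⁻¹ * ∑ n ∈ Finset.Icc 1 N, (inner ℂ (u n) (u (n + d)) : ℂ)‖
        + 4 * K * C ^ 2 / N < ε ^ 2 / 4 :=
    hFlim.eventually_lt_const (by
      have hε2 : (0:ℝ) < ε ^ 2 := by positivity
      rw [add_zero]
      linarith)
  have hev2 : ∀ᶠ N : ℕ in Filter.atTop, (N:ℝ)⁻¹ * (2 * K * C) < ε / 2 := by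
    have h6 := tendsto_inv_atTop_nhds_zero_nat.mul_const (2 * (K:ℝ) * C)
    simp only [zero_mul] at h6
    exact h6.eventually_lt_const (by positivity)
  obtain ⟨M, hM⟩ := Filter.eventually_atTop.mp ((hev1.and hev2).and (Filter.eventually_ge_atTop 1))
  refine ⟨M, fun N hN => ?_⟩
  obtain ⟨⟨hN1, hN2⟩, hN3⟩ := hM N hN
  have hNpos : (0:ℝ) < N := by exact_mod_cast hN3
  rw [Real.dist_eq, sub_zero, abs_of_nonneg (norm_nonneg _)]
  -- the averaged vector
  set S' : H := (N : ℝ)⁻¹ • ∑ n ∈ Finset.Icc 1 N, (K : ℝ)⁻¹ • ∑ h ∈ Finset.range K, u (n + h)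
    with hS'
  set S : H := (N : ℝ)⁻¹ • ∑ n ∈ Finset.Icc 1 N, u n with hS
  have hS'small : ‖S'‖ < ε / 2 := by
    have hkey := vdc_key u C hC hbound K N hK1 hN3
    have h7 : ‖S'‖ ^ 2 < (ε / 2) ^ 2 := by
      rw [hS']
      calc ‖(N : ℝ)⁻¹ • ∑ n ∈ Finset.Icc 1 N, (K : ℝ)⁻¹ • ∑ h ∈ Finset.range K, u (n + h)‖ ^ 2
          ≤ _ := hkey
        _ < ε ^ 2 / 4 := hN1
        _ = (ε / 2) ^ 2 := by ring
    exact lt_of_pow_lt_pow_left₀ 2 (by positivity) h7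
  have hdiff_eq : (∑ n ∈ Finset.Icc 1 N, (K:ℝ)⁻¹ • ∑ h ∈ Finset.range K, u (n + h))
      - ∑ n ∈ Finset.Icc 1 N, u n
      = (K:ℝ)⁻¹ • ∑ h ∈ Finset.range K,
          ((∑ n ∈ Finset.Icc 1 N, u (n + h)) - ∑ n ∈ Finset.Icc 1 N, u n) := by
    rw [← Finset.smul_sum, Finset.sum_sub_distrib, smul_sub]
    congr 1
    · rw [Finset.sum_comm]
    · rw [Finset.sum_const, Finset.card_range, ← Nat.cast_smul_eq_nsmul ℝ, smul_smul,
        inv_mul_cancel₀ (ne_of_gt hKpos), one_smul]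
  have hdiff_norm : ‖S' - S‖ ≤ (N:ℝ)⁻¹ * (2 * K * C) := by
    rw [hS', hS, ← smul_sub, hdiff_eq, norm_smul, norm_smul, Real.norm_eq_abs, Real.norm_eq_abs,
      abs_of_nonneg (by positivity : (0:ℝ) ≤ (N:ℝ)⁻¹),
      abs_of_nonneg (by positivity : (0:ℝ) ≤ (K:ℝ)⁻¹)]
    have hD : ∀ h : ℕ, h < K →
        ‖(∑ n ∈ Finset.Icc 1 N, u (n + h)) - ∑ n ∈ Finset.Icc 1 N, u n‖ ≤ 2 * K * C := by
      intro h hh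
      refine le_trans (vdc_shift u C hbound h N) ?_
      have : (h:ℝ) ≤ K := by exact_mod_cast hh.le
      nlinarith
    have h8 : ‖∑ h ∈ Finset.range K,
        ((∑ n ∈ Finset.Icc 1 N, u (n + h)) - ∑ n ∈ Finset.Icc 1 N, u n)‖ ≤ K * (2 * K * C) := by
      calc ‖∑ h ∈ Finset.range K,
          ((∑ n ∈ Finset.Icc 1 N, u (n + h)) - ∑ n ∈ Finset.Icc 1 N, u n)‖
          ≤ ∑ h ∈ Finset.range K,
            ‖(∑ n ∈ Finset.Icc 1 N, u (n + h)) - ∑ n ∈ Finset.Icc 1 N, u n‖ := norm_sum_le _ _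
        _ ≤ ∑ _h ∈ Finset.range K, (2 * K * C) :=
            Finset.sum_le_sum fun h hh => hD h (Finset.mem_range.mp hh)
        _ = K * (2 * K * C) := by rw [Finset.sum_const, Finset.card_range, nsmul_eq_mul]
    calc (N:ℝ)⁻¹ * ((K:ℝ)⁻¹ * ‖∑ h ∈ Finset.range K,
        ((∑ n ∈ Finset.Icc 1 N, u (n + h)) - ∑ n ∈ Finset.Icc 1 N, u n)‖)
        ≤ (N:ℝ)⁻¹ * ((K:ℝ)⁻¹ * (K * (2 * K * C))) := by
          apply mul_le_mul_of_nonneg_left (mul_le_mul_of_nonneg_left h8 (by positivity))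
            (by positivity)
      _ = (N:ℝ)⁻¹ * (2 * K * C) := by field_simp
  calc ‖S‖ = ‖S' - (S' - S)‖ := by rw [sub_sub_cancel]
    _ ≤ ‖S'‖ + ‖S' - S‖ := norm_sub_le _ _
    _ < ε / 2 + ε / 2 := add_lt_add_of_lt_of_le hS'small (le_trans hdiff_norm hN2.le)
    _ = ε := by ring
end

section
/- Let X be a real random variable of the form X = Σ_{s ∈ S} ε_{f₁(s)} ε_{f₂(s)} ⋯ ε_{f₆(s)}, where (ε_x)_{x ∈ Z/dZ} are independent uniform ±1 random signs and for each s ∈ S the six indices f₁(s), …, f₆(s) ∈ Z/dZ are distinct. If the expectation of X satisfies E[X] ≤ d and the variance satisfies Var(X) > d², then there exists a choice of signs (ε_x) making X negative. -/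
/-- If `X = ∑_{s ∈ S} ε_{f₁(s)} ⋯ ε_{f₆(s)}` with independent uniform ±1 signs
`(ε_x)_{x ∈ ℤ/dℤ}` and all six indices distinct for each `s`, and if `E[X] ≤ d` while
`Var(X) > d²`, then some choice of signs makes `X` negative. -/
theorem statement19 (d : ℕ) [NeZero d] {ι : Type*} (S : Finset ι)
    (f : ι → Fin 6 → ZMod d)
    (hdist : ∀ s ∈ S, Function.Injective (f s))
    (X : (ZMod d → Bool) → ℝ)
    (hX : ∀ σ : ZMod d → Bool,
      X σ = ∑ s ∈ S, ∏ t : Fin 6, (if σ (f s t) then (1 : ℝ) else -1))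
    (μ : ℝ)
    (hμ : μ = (Fintype.card (ZMod d → Bool) : ℝ)⁻¹ * ∑ σ : ZMod d → Bool, X σ)
    (hEX : μ ≤ d)
    (hVar : (d : ℝ) ^ 2 <
      (Fintype.card (ZMod d → Bool) : ℝ)⁻¹ * ∑ σ : ZMod d → Bool, (X σ - μ) ^ 2) :
    ∃ σ : ZMod d → Bool, X σ < 0 := by
  classical
  by_contra h
  push_neg at h
  -- E[X] = 0 since each monomial is a product over distinct indices
  have hsum : ∑ σ : ZMod d → Bool, X σ = 0 := by
    simp_rw [hX]
    rw [Finset.sum_comm]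
    apply Finset.sum_eq_zero
    intro s hs
    set a0 := f s 0 with ha0
    set flip : (ZMod d → Bool) → (ZMod d → Bool) :=
      fun σ => Function.update σ a0 (!σ a0) with hflipdef
    have hinv : Function.Involutive flip := by
      intro σ
      simp only [hflipdef, Function.update_self, Function.update_idem, Bool.not_not,
        Function.update_eq_self]
    have key : ∀ σ : ZMod d → Bool,
        (∏ t : Fin 6, (if flip σ (f s t) then (1 : ℝ) else -1))
          = - ∏ t : Fin 6, (if σ (f s t) then (1 : ℝ) else -1) := by
      intro σ
      have h0 : flip σ (f s 0) = !σ (f s 0) := by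
        simp [hflipdef, ha0]
      have hrest : (∏ t : Fin 5, (if flip σ (f s t.succ) then (1 : ℝ) else -1))
          = ∏ t : Fin 5, (if σ (f s t.succ) then (1 : ℝ) else -1) := by
        apply Finset.prod_congr rfl
        intro t _
        have hne : f s t.succ ≠ a0 := by
          rw [ha0]
          intro hcontra
          exact (Fin.succ_ne_zero t) (hdist s hs hcontra)
        simp [hflipdef, Function.update_of_ne hne]
      calc (∏ t : Fin 6, (if flip σ (f s t) then (1 : ℝ) else -1))
          = (if flip σ (f s 0) then (1 : ℝ) else -1) *
              ∏ t : Fin 5, (if flip σ (f s t.succ) then (1 : ℝ) else -1) :=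
            Fin.prod_univ_succ _
        _ = (if !σ (f s 0) then (1 : ℝ) else -1) *
              ∏ t : Fin 5, (if σ (f s t.succ) then (1 : ℝ) else -1) := by rw [h0, hrest]
        _ = - ((if σ (f s 0) then (1 : ℝ) else -1) *
              ∏ t : Fin 5, (if σ (f s t.succ) then (1 : ℝ) else -1)) := by
            cases σ (f s 0) <;> simp
        _ = - ∏ t : Fin 6, (if σ (f s t) then (1 : ℝ) else -1) := by
            simp [Fin.prod_univ_succ, mul_assoc]
    have hbij : ∑ σ : ZMod d → Bool, (∏ t : Fin 6, (if σ (f s t) then (1 : ℝ) else -1))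
        = ∑ σ : ZMod d → Bool, (∏ t : Fin 6, (if flip σ (f s t) then (1 : ℝ) else -1)) :=
      (Fintype.sum_bijective flip hinv.bijective _ _ (fun σ => rfl)).symm
    have h2 : ∑ σ : ZMod d → Bool, (∏ t : Fin 6, (if flip σ (f s t) then (1 : ℝ) else -1))
        = - ∑ σ : ZMod d → Bool, (∏ t : Fin 6, (if σ (f s t) then (1 : ℝ) else -1)) := by
      rw [← Finset.sum_neg_distrib]
      exact Finset.sum_congr rfl fun σ _ => key σ
    linarith
  -- hence μ = 0
  have hμ0 : μ = 0 := by rw [hμ, hsum, mul_zero]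
  -- all X σ = 0
  have hall : ∀ σ : ZMod d → Bool, X σ = 0 := by
    intro σ
    have := (Finset.sum_eq_zero_iff_of_nonneg (fun σ _ => h σ)).mp hsum
    exact this σ (Finset.mem_univ σ)
  have : ∑ σ : ZMod d → Bool, (X σ - μ) ^ 2 = 0 := by
    apply Finset.sum_eq_zero
    intro σ _
    rw [hall σ, hμ0]; ring
  rw [this, mul_zero] at hVar
  exact absurd hVar (not_lt.mpr (sq_nonneg _))
end
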